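/- The expected number of elements of a level set of the Takagi function at a uniformly random level is infinite: the Lebesgue integral ∫_{[0,2/3]} #L(y) dy = ∞, where #L(y) ∈ [0,∞] denotes the extended cardinality of the level set L(y) = {x ∈ [0,1] : τ(x) = y} (taken as the lower Lebesgue integral of the extended-real-valued function y ↦ #L(y)). -/

import Mathlib

open MeasureTheory Set

/-- Distance from a real number to the nearest integer. -/
noncomputable def distNearestInt (t : ℝ) : ℝ := |t - round t|

/-- The Takagi function. -/
noncomputable def takagi (x : ℝ) : ℝ := ∑' n : ℕ, distNearestInt (2 ^ n * x) / 2 ^ n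

/-- The `j`-th binary digit of `x ∈ [0,1)` (binary expansion terminating in `0^∞`). -/
noncomputable def bdigit (x : ℝ) (j : ℕ) : ℤ := ⌊(2 : ℝ) ^ j * x⌋ - 2 * ⌊(2 : ℝ) ^ (j - 1) * x⌋

/-- The deficient digit function `D_j(x) = j - 2(b_1(x) + ⋯ + b_j(x))`. -/
noncomputable def defDigit (x : ℝ) (j : ℕ) : ℤ := (j : ℤ) - 2 * ∑ i ∈ Finset.Icc 1 j, bdigit x i

/-- The deficient digit set `Ω^L`. -/
noncomputable def OmegaL : Set ℝ := {x | x ∈ Set.Ico (0 : ℝ) 1 ∧ ∀ j : ℕ, 1 ≤ j → 0 ≤ defDigit x j}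

/-- The set `½Ω^L = {x ∈ [0,1) : D_j(x) > 0 for all j ≥ 1}`. -/
noncomputable def halfOmegaL : Set ℝ :=
  {x | x ∈ Set.Ico (0 : ℝ) 1 ∧ ∀ j : ℕ, 1 ≤ j → 0 < defDigit x j}

/-- The Takagi singular function. -/
noncomputable def takagiS (x : ℝ) : ℝ := sSup {y | ∃ t ∈ OmegaL, t ≤ x ∧ y = takagi t + t}

/-- `Ω^L_∞`: points of `Ω^L` with infinitely many balance points. -/
noncomputable def OmegaLinf : Set ℝ :=
  {x ∈ OmegaL | {j : ℕ | 1 ≤ j ∧ defDigit x j = 0}.Infinite}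

/-- `Ω^L_fin = Ω^L \ Ω^L_∞`. -/
noncomputable def OmegaLfin : Set ℝ := OmegaL \ OmegaLinf

/-- `(m, k)` encodes a member `k / 2^(2m)` of the breakpoint set `ℬ'`. -/
noncomputable def breakpoint (m k : ℕ) : Prop :=
  (m = 0 ∧ k = 0) ∨
    (1 ≤ m ∧ 0 < k ∧ k < 2 ^ (2 * m) ∧
      (∀ j : ℕ, 1 ≤ j → j ≤ 2 * m - 1 → 0 ≤ defDigit ((k : ℝ) / 2 ^ (2 * m)) j) ∧
      defDigit ((k : ℝ) / 2 ^ (2 * m)) (2 * m) = 0)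

/-- The fine partition set `Ω^L(B)` for `B = k / 2^(2m)`. -/
noncomputable def fineSet (m k : ℕ) : Set ℝ :=
  {x | ∃ x' ∈ halfOmegaL, x = (k : ℝ) / 2 ^ (2 * m) + x' / 2 ^ (2 * m)}

/-- The set `Γ_{2r}`. -/
noncomputable def Gamma (r : ℕ) : Set ℝ :=
  {x | x ∈ Set.Ico (0 : ℝ) 1 ∧ ∀ j : ℕ, 1 ≤ j →
    ((¬ (2 * r ∣ j) → 0 < defDigit x j) ∧ ((2 * r) ∣ j → defDigit x j = 0))}

/-- The level set `L(y)` of the Takagi function. -/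
noncomputable def levelSet (y : ℝ) : Set ℝ := {x ∈ Set.Icc (0 : ℝ) 1 | takagi x = y}
section TakagiAux
open scoped ENNReal

lemma dni_nonneg (t : ℝ) : 0 ≤ distNearestInt t := abs_nonneg _

lemma dni_le_half (t : ℝ) : distNearestInt t ≤ 1 / 2 := abs_sub_round t

lemma dni_le_int (t : ℝ) (m : ℤ) : distNearestInt t ≤ |t - m| := by
  rcases eq_or_ne m (round t) with h | h
  · simp [distNearestInt, h]
  · have h1 : (1 : ℝ) ≤ |(round t : ℝ) - m| := by
      have : round t - m ≠ 0 := sub_ne_zero.mpr (by exact_mod_cast (Ne.symm h))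
      have : 1 ≤ |round t - m| := Int.one_le_abs this
      calc (1:ℝ) ≤ |(round t - m : ℤ)| := by exact_mod_cast this
        _ = |(round t : ℝ) - m| := by push_cast; ring_nf
    have h2 : |(round t : ℝ) - m| ≤ |t - round t| + |t - m| := by
      have := abs_sub (t - (m:ℝ)) (t - (round t : ℝ))
      calc |(round t : ℝ) - m| = |(t - m) - (t - round t)| := by ring_nf
        _ ≤ |t - m| + |t - round t| := abs_sub _ _
        _ = |t - round t| + |t - m| := by ring
    have h3 := dni_le_half t
    have : distNearestInt t = |t - round t| := rfl
    nlinarith [abs_nonneg (t - (m:ℝ))]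

lemma dni_add_int (t : ℝ) (m : ℤ) : distNearestInt (t + m) = distNearestInt t := by
  simp [distNearestInt, round_add_intCast]

lemma dni_neg (t : ℝ) : distNearestInt (-t) = distNearestInt t := by
  have h1 : distNearestInt (-t) ≤ distNearestInt t := by
    calc distNearestInt (-t) ≤ |(-t) - (-(round t) : ℤ)| := dni_le_int _ _
      _ = |t - round t| := by push_cast; rw [← abs_neg]; ring_nf
  have h2 : distNearestInt t ≤ distNearestInt (-t) := by
    calc distNearestInt t ≤ |t - (-(round (-t)) : ℤ)| := dni_le_int _ _
      _ = |(-t) - round (-t)| := by push_cast; rw [← abs_neg]; ring_nf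
  linarith

lemma dni_lipschitz (s t : ℝ) : |distNearestInt s - distNearestInt t| ≤ |s - t| := by
  have h1 : distNearestInt s ≤ |s - t| + distNearestInt t := by
    calc distNearestInt s ≤ |s - round t| := dni_le_int _ _
      _ = |(s - t) + (t - round t)| := by ring_nf
      _ ≤ |s - t| + |t - round t| := abs_add_le _ _
  have h2 : distNearestInt t ≤ |s - t| + distNearestInt s := by
    calc distNearestInt t ≤ |t - round s| := dni_le_int _ _
      _ = |(t - s) + (s - round s)| := by ring_nf
      _ ≤ |t - s| + |s - round s| := abs_add_le _ _
      _ = |s - t| + distNearestInt s := by rw [abs_sub_comm]; rfl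
  rw [abs_sub_le_iff]; constructor <;> linarith

lemma dni_eq_self {t : ℝ} (h0 : 0 ≤ t) (h1 : t ≤ 1 / 2) : distNearestInt t = t := by
  have hle : distNearestInt t ≤ t := by
    have := dni_le_int t 0; simpa [h0, abs_of_nonneg] using this
  have hge : t ≤ distNearestInt t := by
    rcases le_or_gt (round t) 0 with h | h
    · have hc : (round t : ℝ) ≤ 0 := by exact_mod_cast h
      rw [distNearestInt, abs_of_nonneg (by linarith)]
      linarith
    · have hc : (1 : ℝ) ≤ round t := by exact_mod_cast h
      rw [distNearestInt, abs_of_nonpos (by linarith)]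
      linarith
  linarith

lemma summable_takagi (x : ℝ) : Summable (fun n : ℕ => distNearestInt (2 ^ n * x) / 2 ^ n) := by
  apply Summable.of_nonneg_of_le (fun n => div_nonneg (dni_nonneg _) (by positivity))
    (fun n => ?_) (summable_geometric_two.mul_left (1/2))
  have h2 : (1:ℝ) / 2 * (1 / 2) ^ n * 2 ^ n = 1 / 2 := by
    rw [mul_assoc, ← mul_pow]; norm_num
  rw [div_le_iff₀ (by positivity : (0:ℝ) < 2 ^ n), h2]
  exact dni_le_half _

lemma continuous_takagi : Continuous takagi := by
  apply continuous_tsum (u := fun n : ℕ => 1/2 * (1/2)^n)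
    (fun n => ?_) (summable_geometric_two.mul_left (1/2)) (fun n x => ?_)
  · have hl : LipschitzWith 1 distNearestInt := by
      apply LipschitzWith.of_dist_le_mul
      intro a b
      simpa [Real.dist_eq] using dni_lipschitz a b
    exact (hl.continuous.comp (continuous_const.mul continuous_id)).div_const _
  · rw [Real.norm_eq_abs, abs_div, abs_of_nonneg (dni_nonneg _), abs_of_nonneg (by positivity : (0:ℝ) ≤ 2^n)]
    rw [div_le_iff₀ (by positivity)]
    calc distNearestInt (2 ^ n * x) ≤ 1/2 := dni_le_half _
      _ ≤ 1 / 2 * (1 / 2) ^ n * 2 ^ n := by rw [mul_assoc, ← mul_pow]; norm_num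

lemma takagi_nonneg (x : ℝ) : 0 ≤ takagi x :=
  tsum_nonneg (fun n => div_nonneg (dni_nonneg _) (by positivity))

lemma dni_pair (t : ℝ) : distNearestInt t + distNearestInt (2 * t) / 2 ≤ 1 / 2 := by
  set u := t - round t with hu
  have hd : distNearestInt t = |u| := rfl
  have hu2 : |u| ≤ 1/2 := abs_sub_round t
  have h2t : distNearestInt (2 * t) = distNearestInt (2 * u) := by
    have : 2 * t = 2 * u + (2 * round t : ℤ) := by push_cast; ring
    rw [this, dni_add_int]
  rcases le_or_gt (|u|) (1/4) with h | h
  · have : distNearestInt (2 * u) ≤ |2 * u| := by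
      have := dni_le_int (2*u) 0; simpa using this
    rw [hd, h2t]
    have : |2*u| = 2 * |u| := by rw [abs_mul]; norm_num
    nlinarith [dni_le_int (2*u) 0, abs_nonneg (2*u)]
  · rcases le_or_gt 0 u with hpos | hneg
    · have : distNearestInt (2 * u) ≤ |2 * u - (1:ℤ)| := dni_le_int _ _
      have habs : |2 * u - (1:ℤ)| = 1 - 2 * u := by
        rw [abs_of_nonpos] <;> push_cast <;> [skip; nlinarith [abs_of_nonneg hpos ▸ hu2]] 
        rw [abs_of_nonneg hpos] at hu2; push_cast; linarith
      rw [hd, h2t, abs_of_nonneg hpos]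
      rw [abs_of_nonneg hpos] at h
      push_cast at habs this
      linarith
    · have : distNearestInt (2 * u) ≤ |2 * u - (-1:ℤ)| := dni_le_int _ _
      have habs : |2 * u - (-1:ℤ)| = 1 + 2 * u := by
        rw [abs_of_nonneg]; push_cast; ring
        rw [abs_of_neg hneg] at hu2; push_cast; linarith
      rw [hd, h2t, abs_of_neg hneg]
      rw [abs_of_neg hneg] at h
      push_cast at habs this
      linarith

lemma takagi_le (x : ℝ) : takagi x ≤ 2 / 3 := by
  set f := fun n : ℕ => distNearestInt (2 ^ n * x) / 2 ^ n with hf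
  have hsum := summable_takagi x
  have he : Summable (fun k : ℕ => f (2 * k)) := hsum.comp_injective (fun a b => by omega)
  have ho : Summable (fun k : ℕ => f (2 * k + 1)) := hsum.comp_injective (fun a b => by omega)
  have key : takagi x = ∑' k, (f (2 * k) + f (2 * k + 1)) := by
    rw [takagi, ← tsum_even_add_odd he ho, Summable.tsum_add he ho]
  rw [key]
  have hle : ∀ k : ℕ, f (2 * k) + f (2 * k + 1) ≤ 1/2 * (1/4)^k := by
    intro k
    have hpair := dni_pair (2 ^ (2*k) * x)
    have h1 : f (2 * k) = distNearestInt (2 ^ (2*k) * x) / 2 ^ (2*k) := rfl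
    have h2 : f (2 * k + 1) = distNearestInt (2 * (2 ^ (2*k) * x)) / (2 * 2 ^ (2*k)) := by
      simp only [hf, pow_succ, pow_mul]
      ring_nf
    rw [h1, h2]
    have hp : (0:ℝ) < 2 ^ (2*k) := by positivity
    rw [div_add_div _ _ (ne_of_gt hp) (by positivity)]
    rw [div_le_iff₀ (by positivity)]
    have h4 : ((1:ℝ)/4)^k * (2 ^ (2*k)) = 1 := by
      rw [pow_mul]; norm_num [← mul_pow]
    nlinarith [dni_nonneg (2 ^ (2*k) * x), dni_nonneg (2 * (2 ^ (2*k) * x))]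
  calc ∑' k, (f (2 * k) + f (2 * k + 1)) ≤ ∑' k : ℕ, 1/2 * (1/4)^k := by
        apply Summable.tsum_le_tsum hle (he.add ho)
        exact (summable_geometric_of_lt_one (by norm_num) (by norm_num)).mul_left _
    _ = 1/2 * ∑' k : ℕ, (1/4:ℝ)^k := tsum_mul_left
    _ = 2/3 := by
        rw [tsum_geometric_of_lt_one (by norm_num) (by norm_num)]; norm_num

lemma takagi_add_one (x : ℝ) : takagi (x + 1) = takagi x := by
  unfold takagi
  apply tsum_congr
  intro n
  have h : 2 ^ n * (x + 1) = 2 ^ n * x + ((2 ^ n : ℤ) : ℝ) := by push_cast; ring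
  rw [h, dni_add_int]

lemma takagi_zero : takagi 0 = 0 := by
  simp [takagi, distNearestInt]

lemma takagi_half_left {x : ℝ} (h0 : 0 ≤ x) (h1 : x ≤ 1) :
    takagi (x / 2) = x / 2 + takagi x / 2 := by
  rw [takagi, Summable.tsum_eq_zero_add (summable_takagi (x/2))]
  have h00 : distNearestInt (2 ^ 0 * (x / 2)) / 2 ^ 0 = x / 2 := by
    simp only [pow_zero, one_mul, div_one]
    exact dni_eq_self (by linarith) (by linarith)
  rw [h00]
  congr 1
  have hshift : ∀ n : ℕ, distNearestInt (2 ^ (n + 1) * (x / 2)) / 2 ^ (n + 1)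
      = (distNearestInt (2 ^ n * x) / 2 ^ n) / 2 := by
    intro n
    have h : 2 ^ (n + 1) * (x / 2) = 2 ^ n * x := by ring
    rw [h, pow_succ]; ring
  rw [tsum_congr hshift, tsum_div_const, takagi]

lemma takagi_half_right {x : ℝ} (h0 : 0 ≤ x) (h1 : x ≤ 1) :
    takagi ((x + 1) / 2) = (1 - x) / 2 + takagi x / 2 := by
  rw [takagi, Summable.tsum_eq_zero_add (summable_takagi ((x+1)/2))]
  have h00 : distNearestInt (2 ^ 0 * ((x + 1) / 2)) / 2 ^ 0 = (1 - x) / 2 := by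
    simp only [pow_zero, one_mul, div_one]
    have e1 : (x + 1) / 2 = -((1 - x) / 2) + ((1 : ℤ) : ℝ) := by push_cast; ring
    rw [e1, dni_add_int, dni_neg]
    exact dni_eq_self (by linarith) (by linarith)
  rw [h00]
  congr 1
  have hshift : ∀ n : ℕ, distNearestInt (2 ^ (n + 1) * ((x + 1) / 2)) / 2 ^ (n + 1)
      = (distNearestInt (2 ^ n * x) / 2 ^ n) / 2 := by
    intro n
    have h : 2 ^ (n + 1) * ((x + 1) / 2) = 2 ^ n * x + ((2 ^ n : ℤ) : ℝ) := by push_cast; ring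
    rw [h, dni_add_int, pow_succ]; ring
  rw [tsum_congr hshift, tsum_div_const, takagi]

/-- The slopes of the Takagi function on dyadic intervals (a ±1 walk). -/
def wfun : ℕ → ℕ → ℤ
  | 0, _ => 0
  | (n + 1), k => if k < 2 ^ n then wfun n k + 1 else wfun n (k - 2 ^ n) - 1

lemma takagi_slope : ∀ n k : ℕ, k < 2 ^ n →
    takagi (((k : ℝ) + 1) / 2 ^ n) - takagi ((k : ℝ) / 2 ^ n)
      = (wfun n k : ℝ) / 2 ^ n := by
  intro n
  induction n with
  | zero =>
      intro k hk
      interval_cases k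
      have h1 : ((0:ℕ):ℝ) + 1 = 0 + 1 := by norm_num
      simp only [wfun, pow_zero, div_one, Int.cast_zero, Nat.cast_zero, h1]
      rw [takagi_add_one, takagi_zero]
      norm_num [takagi_zero]
  | succ n ih =>
      intro k hk
      have hpos : (0:ℝ) < 2 ^ n := by positivity
      by_cases h : k < 2 ^ n
      · have hb1 : (0:ℝ) ≤ (k:ℝ) / 2 ^ n := by positivity
        have hb1' : (k:ℝ) / 2 ^ n ≤ 1 := by
          rw [div_le_one hpos]; exact_mod_cast h.le
        have hb2 : (0:ℝ) ≤ ((k:ℝ) + 1) / 2 ^ n := by positivity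
        have hb2' : ((k:ℝ) + 1) / 2 ^ n ≤ 1 := by
          rw [div_le_one hpos]
          have : (k:ℕ) + 1 ≤ 2 ^ n := h
          exact_mod_cast this
        have e1 : (k:ℝ) / 2 ^ (n + 1) = ((k:ℝ) / 2 ^ n) / 2 := by rw [pow_succ]; ring
        have e2 : ((k:ℝ) + 1) / 2 ^ (n + 1) = (((k:ℝ) + 1) / 2 ^ n) / 2 := by
          rw [pow_succ]; ring
        rw [e1, e2, takagi_half_left hb2 hb2', takagi_half_left hb1 hb1']
        have key := ih k h
        have ew : wfun (n + 1) k = wfun n k + 1 := by rw [wfun, if_pos h]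
        rw [ew]
        push_cast
        rw [pow_succ]
        have expand : ((k:ℝ) + 1) / 2 ^ n / 2 + takagi (((k:ℝ) + 1) / 2 ^ n) / 2
            - ((k:ℝ) / 2 ^ n / 2 + takagi ((k:ℝ) / 2 ^ n) / 2)
            = (1 / 2 ^ n + (takagi (((k:ℝ) + 1) / 2 ^ n) - takagi ((k:ℝ) / 2 ^ n))) / 2 := by
          ring
        rw [expand, key]
        field_simp
        ring
      · have hj : k - 2 ^ n < 2 ^ n := by
          have h2 : 2 ^ (n+1) = 2 ^ n + 2 ^ n := by ring
          omega
        set j := k - 2 ^ n with hjdef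
        have hkj : k = j + 2 ^ n := by omega
        have hcast : (k : ℝ) = (j : ℝ) + 2 ^ n := by
          rw [hkj]; push_cast; ring
        have hb1 : (0:ℝ) ≤ (j:ℝ) / 2 ^ n := by positivity
        have hb1' : (j:ℝ) / 2 ^ n ≤ 1 := by
          rw [div_le_one hpos]; exact_mod_cast hj.le
        have hb2 : (0:ℝ) ≤ ((j:ℝ) + 1) / 2 ^ n := by positivity
        have hb2' : ((j:ℝ) + 1) / 2 ^ n ≤ 1 := by
          rw [div_le_one hpos]
          have : (j:ℕ) + 1 ≤ 2 ^ n := hj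
          exact_mod_cast this
        have e1 : (k:ℝ) / 2 ^ (n + 1) = ((j:ℝ) / 2 ^ n + 1) / 2 := by
          rw [hcast, pow_succ]; field_simp; try ring
        have e2 : ((k:ℝ) + 1) / 2 ^ (n + 1) = (((j:ℝ) + 1) / 2 ^ n + 1) / 2 := by
          rw [hcast, pow_succ]; field_simp; try ring
        rw [e1, e2, takagi_half_right hb2 hb2', takagi_half_right hb1 hb1']
        have key := ih j hj
        have ew : wfun (n + 1) k = wfun n j - 1 := by rw [wfun, if_neg h]
        rw [ew]
        push_cast
        rw [pow_succ]
        have expand : (1 - ((j:ℝ) + 1) / 2 ^ n) / 2 + takagi (((j:ℝ) + 1) / 2 ^ n) / 2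
            - ((1 - (j:ℝ) / 2 ^ n) / 2 + takagi ((j:ℝ) / 2 ^ n) / 2)
            = (-(1 / 2 ^ n) + (takagi (((j:ℝ) + 1) / 2 ^ n) - takagi ((j:ℝ) / 2 ^ n))) / 2 := by
          ring
        rw [expand, key]
        field_simp
        ring

lemma wfun_abs_le : ∀ n k : ℕ, (wfun n k).natAbs ≤ n := by
  intro n
  induction n with
  | zero => intro k; simp [wfun]
  | succ n ih =>
      intro k
      rw [wfun]
      split
      · have := ih k; omega
      · have := ih (k - 2 ^ n); omega

lemma wfun_count : ∀ n m : ℕ,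
    ((Finset.range (2 ^ n)).filter (fun k => wfun n k = (n : ℤ) - 2 * m)).card
      = n.choose m := by
  intro n
  induction n with
  | zero =>
      intro m
      simp only [pow_zero, Finset.range_one, Finset.filter_singleton]
      cases m with
      | zero => simp [wfun]
      | succ m =>
          rw [if_neg (by simp [wfun]; omega), Nat.choose_eq_zero_of_lt (by omega)]
          simp
  | succ n ih =>
      intro m
      have hsplit : (2:ℕ) ^ (n + 1) = 2 ^ n + 2 ^ n := by ring
      rw [Finset.card_filter, hsplit, Finset.sum_range_add]
      have e1 : ∀ k ∈ Finset.range (2 ^ n),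
          (if wfun (n+1) k = ((n+1 : ℕ) : ℤ) - 2 * m then (1:ℕ) else 0)
          = (if wfun n k = (n : ℤ) - 2 * m then (1:ℕ) else 0) := by
        intro k hk
        rw [Finset.mem_range] at hk
        rw [wfun, if_pos hk]
        congr 1
        simp only [eq_iff_iff]
        push_cast
        omega
      have hw2 : ∀ k : ℕ, k < 2 ^ n → wfun (n+1) (2 ^ n + k) = wfun n k - 1 := by
        intro k hk
        have h1 : ¬ (2 ^ n + k < 2 ^ n) := by omega
        have h2 : 2 ^ n + k - 2 ^ n = k := by omega
        rw [wfun, if_neg h1, h2]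
      have e2 : ∀ k ∈ Finset.range (2 ^ n),
          (if wfun (n+1) (2 ^ n + k) = ((n+1 : ℕ) : ℤ) - 2 * m then (1:ℕ) else 0)
          = (if wfun n k = (n : ℤ) + 2 - 2 * m then (1:ℕ) else 0) := by
        intro k hk
        rw [Finset.mem_range] at hk
        rw [hw2 k hk]
        congr 1
        simp only [eq_iff_iff]
        push_cast
        omega
      rw [Finset.sum_congr rfl e1, Finset.sum_congr rfl e2, ← Finset.card_filter,
        ← Finset.card_filter]
      cases m with
      | zero =>
          have hempty : ((Finset.range (2 ^ n)).filter
              (fun k => wfun n k = (n : ℤ) + 2 - 2 * (0:ℕ))).card = 0 := by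
            rw [Finset.card_eq_zero, Finset.filter_eq_empty_iff]
            intro k _
            have := wfun_abs_le n k
            push_cast
            omega
          rw [ih 0, hempty, Nat.choose_zero_right, Nat.choose_zero_right]
      | succ m =>
          have h2 : ((n : ℤ) + 2 - 2 * (m+1 : ℕ)) = (n : ℤ) - 2 * m := by push_cast; ring
          rw [h2, ih (m+1), ih m, Nat.choose_succ_succ']
          omega

def Zfun (n : ℕ) : ℕ := ((Finset.range (2 ^ n)).filter (fun k => wfun n k = 0)).card

def Afun (n : ℕ) : ℕ := ∑ k ∈ Finset.range (2 ^ n), (wfun n k).natAbs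

lemma Zfun_eq (m : ℕ) : Zfun (2 * m) = (2 * m).choose m := by
  rw [← wfun_count (2 * m) m, Zfun]
  congr 1
  apply Finset.filter_congr
  intro k _
  push_cast
  constructor <;> intro h <;> omega

lemma Afun_succ (n : ℕ) : Afun (n + 1) = 2 * Afun n + 2 * Zfun n := by
  unfold Afun
  have hsplit : (2:ℕ) ^ (n + 1) = 2 ^ n + 2 ^ n := by ring
  rw [hsplit, Finset.sum_range_add]
  have e1 : ∀ k ∈ Finset.range (2 ^ n),
      (wfun (n+1) k).natAbs = (wfun n k + 1).natAbs := by
    intro k hk; rw [Finset.mem_range] at hk; rw [wfun, if_pos hk]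
  have e2 : ∀ k ∈ Finset.range (2 ^ n),
      (wfun (n+1) (2 ^ n + k)).natAbs = (wfun n k - 1).natAbs := by
    intro k hk; rw [Finset.mem_range] at hk
    have h1 : ¬ (2 ^ n + k < 2 ^ n) := by omega
    have h2 : 2 ^ n + k - 2 ^ n = k := by omega
    rw [wfun, if_neg h1, h2]
  rw [Finset.sum_congr rfl e1, Finset.sum_congr rfl e2, ← Finset.sum_add_distrib]
  have e3 : ∀ k ∈ Finset.range (2 ^ n),
      (wfun n k + 1).natAbs + (wfun n k - 1).natAbs
        = 2 * (wfun n k).natAbs + (if wfun n k = 0 then 2 else 0) := by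
    intro k _
    split <;> omega
  rw [Finset.sum_congr rfl e3, Finset.sum_add_distrib]
  congr 1
  · rw [Finset.mul_sum]
  · rw [← Finset.sum_filter, Zfun, Finset.sum_const, smul_eq_mul, mul_comm]
lemma Afun_div (n : ℕ) :
    (Afun n : ℝ) / 2 ^ n = ∑ j ∈ Finset.range n, (Zfun j : ℝ) / 2 ^ j := by
  induction n with
  | zero => simp [Afun, wfun]
  | succ n ih =>
      rw [Finset.sum_range_succ, ← ih, Afun_succ]
      push_cast
      field_simp
      ring

lemma Zfun_ge (m : ℕ) (hm : 1 ≤ m) :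
    1 / (2 * (m : ℝ)) ≤ (Zfun (2 * m) : ℝ) / 2 ^ (2 * m) := by
  have h := Nat.four_pow_le_two_mul_self_mul_centralBinom m hm
  have hc : Nat.centralBinom m = (2 * m).choose m := rfl
  rw [hc] at h
  have hr : (4 : ℝ) ^ m ≤ 2 * m * Zfun (2 * m) := by
    rw [Zfun_eq]
    exact_mod_cast h
  have h4 : (2 : ℝ) ^ (2 * m) = 4 ^ m := by
    rw [pow_mul]; norm_num
  rw [h4, div_le_div_iff₀ (by positivity) (by positivity)]
  nlinarith [pow_pos (by norm_num : (0:ℝ) < 4) m]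

lemma Afun_unbounded (C : ℝ) : ∃ n : ℕ, C ≤ (Afun n : ℝ) / 2 ^ n := by
  obtain ⟨N, hN⟩ := (Filter.tendsto_atTop.mp Real.tendsto_sum_range_one_div_nat_succ_atTop
    (2 * C)).exists
  refine ⟨2 * (N + 1), ?_⟩
  rw [Afun_div]
  have hsub : (Finset.Ico 1 (N + 1)).image (fun m => 2 * m) ⊆ Finset.range (2 * (N + 1)) := by
    intro j hj
    simp only [Finset.mem_image, Finset.mem_Ico] at hj
    obtain ⟨m, hm, rfl⟩ := hj
    rw [Finset.mem_range]; omega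
  have hnonneg : ∀ j ∈ Finset.range (2 * (N + 1)), (0:ℝ) ≤ (Zfun j : ℝ) / 2 ^ j :=
    fun j _ => by positivity
  have step1 : ∑ j ∈ (Finset.Ico 1 (N + 1)).image (fun m => 2 * m), (Zfun j : ℝ) / 2 ^ j
      ≤ ∑ j ∈ Finset.range (2 * (N + 1)), (Zfun j : ℝ) / 2 ^ j :=
    Finset.sum_le_sum_of_subset_of_nonneg hsub (fun j hj _ => by positivity)
  have step2 : ∑ j ∈ (Finset.Ico 1 (N + 1)).image (fun m => 2 * m), (Zfun j : ℝ) / 2 ^ j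
      = ∑ m ∈ Finset.Ico 1 (N + 1), (Zfun (2 * m) : ℝ) / 2 ^ (2 * m) := by
    exact Finset.sum_image (fun a _ b _ hab => by omega)
  have step3 : ∑ m ∈ Finset.Ico 1 (N + 1), (1 : ℝ) / (2 * m)
      ≤ ∑ m ∈ Finset.Ico 1 (N + 1), (Zfun (2 * m) : ℝ) / 2 ^ (2 * m) := by
    apply Finset.sum_le_sum
    intro m hm
    rw [Finset.mem_Ico] at hm
    exact Zfun_ge m hm.1
  have step4 : ∑ m ∈ Finset.Ico 1 (N + 1), (1 : ℝ) / (2 * m)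
      = (1/2) * ∑ i ∈ Finset.range N, 1 / ((i : ℝ) + 1) := by
    rw [Finset.sum_Ico_eq_sum_range, Finset.mul_sum]
    apply Finset.sum_congr (by norm_num)
    intro i _
    push_cast
    rw [one_div, one_div, mul_inv]
    ring
  calc C = (1/2) * (2 * C) := by ring
    _ ≤ (1/2) * ∑ i ∈ Finset.range N, 1 / ((i : ℝ) + 1) := by linarith
    _ = ∑ m ∈ Finset.Ico 1 (N + 1), (1 : ℝ) / (2 * m) := step4.symm
    _ ≤ ∑ m ∈ Finset.Ico 1 (N + 1), (Zfun (2 * m) : ℝ) / 2 ^ (2 * m) := step3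
    _ = _ := step2.symm
    _ ≤ _ := step1

noncomputable def Iset (n k : ℕ) : Set ℝ :=
  Set.Ioo (min (takagi ((k : ℝ) / 2 ^ n)) (takagi (((k : ℝ) + 1) / 2 ^ n)))
          (max (takagi ((k : ℝ) / 2 ^ n)) (takagi (((k : ℝ) + 1) / 2 ^ n)))

lemma Iset_subset (n k : ℕ) : Iset n k ⊆ Set.Icc 0 (2 / 3) := by
  intro y hy
  obtain ⟨h1, h2⟩ := hy
  exact ⟨le_trans (le_min (takagi_nonneg _) (takagi_nonneg _)) h1.le,
    le_trans h2.le (max_le (takagi_le _) (takagi_le _))⟩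

lemma Iset_measurable (n k : ℕ) : MeasurableSet (Iset n k) := measurableSet_Ioo

lemma volume_Iset (n k : ℕ) (hk : k < 2 ^ n) :
    volume (Iset n k) = ENNReal.ofReal (((wfun n k).natAbs : ℝ) / 2 ^ n) := by
  rw [Iset, Real.volume_Ioo]
  congr 1
  rw [max_sub_min_eq_abs, takagi_slope n k hk, abs_div,
    abs_of_nonneg (by positivity : (0:ℝ) ≤ 2 ^ n)]
  simp [Nat.cast_natAbs]

lemma card_le_encard (n : ℕ) (y : ℝ) :
    ∑ k ∈ Finset.range (2 ^ n), (Iset n k).indicator (fun _ => (1 : ℝ≥0∞)) y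
      ≤ ((levelSet y).encard : ℝ≥0∞) := by
  classical
  have hpos : (0:ℝ) < 2 ^ n := by positivity
  set F := (Finset.range (2 ^ n)).filter (fun k => y ∈ Iset n k) with hF
  have hsum : ∑ k ∈ Finset.range (2 ^ n), (Iset n k).indicator (fun _ => (1 : ℝ≥0∞)) y
      = (F.card : ℝ≥0∞) := by
    rw [hF, Finset.card_filter]
    push_cast
    apply Finset.sum_congr rfl
    intro k _
    rw [Set.indicator_apply]
  rw [hsum]
  have hex : ∀ k ∈ F, ∃ x, x ∈ Set.Ioo ((k : ℝ) / 2 ^ n) (((k : ℝ) + 1) / 2 ^ n)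
      ∧ takagi x = y := by
    intro k hkF
    rw [hF, Finset.mem_filter] at hkF
    obtain ⟨_, hy⟩ := hkF
    have hab : (k : ℝ) / 2 ^ n ≤ ((k : ℝ) + 1) / 2 ^ n := by gcongr <;> linarith
    have hcont : ContinuousOn takagi
        (Set.Icc ((k : ℝ) / 2 ^ n) (((k : ℝ) + 1) / 2 ^ n)) :=
      continuous_takagi.continuousOn
    rcases le_total (takagi ((k : ℝ) / 2 ^ n)) (takagi (((k : ℝ) + 1) / 2 ^ n)) with h | h
    · have hy' : y ∈ Set.Ioo (takagi ((k : ℝ) / 2 ^ n)) (takagi (((k : ℝ) + 1) / 2 ^ n)) := by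
        rw [Iset, min_eq_left h, max_eq_right h] at hy; exact hy
      obtain ⟨x, hx1, hx2⟩ := intermediate_value_Ioo hab hcont hy'
      exact ⟨x, hx1, hx2⟩
    · have hy' : y ∈ Set.Ioo (takagi (((k : ℝ) + 1) / 2 ^ n)) (takagi ((k : ℝ) / 2 ^ n)) := by
        rw [Iset, min_eq_right h, max_eq_left h] at hy; exact hy
      obtain ⟨x, hx1, hx2⟩ := intermediate_value_Ioo' hab hcont hy'
      exact ⟨x, hx1, hx2⟩
  choose! g hg1 hg2 using hex
  have hinj : Set.InjOn g ↑F := by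
    intro p hp q hq hpq
    have h1 := hg1 p (by exact_mod_cast hp)
    have h2 := hg1 q (by exact_mod_cast hq)
    have c1 : (p : ℝ) / 2 ^ n < ((q : ℝ) + 1) / 2 ^ n := lt_trans h1.1 (hpq ▸ h2.2)
    have c2 : (q : ℝ) / 2 ^ n < ((p : ℝ) + 1) / 2 ^ n := lt_trans h2.1 (hpq ▸ h1.2)
    have d1 : (p : ℝ) < (q : ℝ) + 1 := by
      rw [div_lt_div_iff₀ hpos hpos] at c1; nlinarith
    have d2 : (q : ℝ) < (p : ℝ) + 1 := by
      rw [div_lt_div_iff₀ hpos hpos] at c2; nlinarith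
    have : p < q + 1 := by exact_mod_cast d1
    have : q < p + 1 := by exact_mod_cast d2
    omega
  have hsub : ↑(F.image g) ⊆ levelSet y := by
    intro x hx
    rw [Finset.coe_image] at hx
    obtain ⟨k, hk, rfl⟩ := hx
    have hk' : k ∈ F := hk
    have hk2 : k + 1 ≤ 2 ^ n := Finset.mem_range.mp (Finset.mem_filter.mp hk').1
    have hmem := hg1 k hk'
    have hval := hg2 k hk'
    refine ⟨⟨?_, ?_⟩, hval⟩
    · have h0 : (0:ℝ) ≤ (k : ℝ) / 2 ^ n := by positivity
      linarith [hmem.1]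
    · have h1 : ((k : ℝ) + 1) / 2 ^ n ≤ 1 := by
        rw [div_le_one hpos]
        exact_mod_cast hk2
      linarith [hmem.2]
  calc (F.card : ℝ≥0∞) = ((F.image g).card : ℝ≥0∞) := by
        rw [Finset.card_image_of_injOn hinj]
    _ = (((F.image g : Finset ℝ) : Set ℝ).encard : ℝ≥0∞) := by
        rw [Set.encard_coe_eq_coe_finsetCard]
        simp
    _ ≤ ((levelSet y).encard : ℝ≥0∞) := by
        exact_mod_cast Set.encard_le_encard hsub

lemma lintegral_lower (n : ℕ) :
    ENNReal.ofReal ((Afun n : ℝ) / 2 ^ n)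
      ≤ ∫⁻ y in Set.Icc (0 : ℝ) (2 / 3), ((levelSet y).encard : ℝ≥0∞) := by
  have hmeas : ∀ k ∈ Finset.range (2 ^ n),
      Measurable ((Iset n k).indicator (fun _ => (1 : ℝ≥0∞))) :=
    fun k _ => measurable_const.indicator (Iset_measurable n k)
  have step1 : ENNReal.ofReal ((Afun n : ℝ) / 2 ^ n)
      = ∑ k ∈ Finset.range (2 ^ n), volume (Iset n k) := by
    have : (Afun n : ℝ) / 2 ^ n
        = ∑ k ∈ Finset.range (2 ^ n), ((wfun n k).natAbs : ℝ) / 2 ^ n := by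
      rw [Afun]
      push_cast
      rw [Finset.sum_div]
    rw [this, ENNReal.ofReal_sum_of_nonneg (fun k _ => by positivity)]
    apply Finset.sum_congr rfl
    intro k hk
    rw [volume_Iset n k (Finset.mem_range.mp hk)]
  have step2 : ∑ k ∈ Finset.range (2 ^ n), volume (Iset n k)
      = ∫⁻ y in Set.Icc (0 : ℝ) (2 / 3),
          ∑ k ∈ Finset.range (2 ^ n), (Iset n k).indicator (fun _ => (1 : ℝ≥0∞)) y := by
    rw [lintegral_finset_sum _ hmeas]
    apply Finset.sum_congr rfl
    intro k _
    rw [lintegral_indicator (Iset_measurable n k), setLIntegral_one,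
      Measure.restrict_apply (Iset_measurable n k),
      Set.inter_eq_self_of_subset_left (Iset_subset n k)]
  rw [step1, step2]
  exact lintegral_mono (fun y => card_le_encard n y)

end TakagiAux

open scoped ENNReal in
/-- The expected cardinality of a level set at a uniformly random level is infinite. -/
theorem lintegral_levelSet_card_eq_top :
    ∫⁻ y in Set.Icc (0 : ℝ) (2 / 3), ((levelSet y).encard : ℝ≥0∞) = ⊤ := by
  apply ENNReal.eq_top_of_forall_nnreal_le
  intro r
  obtain ⟨n, hn⟩ := Afun_unbounded (r : ℝ)
  calc (r : ℝ≥0∞) = ENNReal.ofReal (r : ℝ) := ENNReal.ofReal_coe_nnreal.symm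
    _ ≤ ENNReal.ofReal ((Afun n : ℝ) / 2 ^ n) := ENNReal.ofReal_le_ofReal hn
    _ ≤ _ := lintegral_lower n
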